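/- arXiv:2209.10137 — 5 statements merged into one kernel-verified Lean document; each statement's English description precedes it below -/
import Mathlib

section
/- If (q,t) is a symmetric mechanism on the strict type space D^H ⊆ [v̲,v̄]^n that is incentive compatible, then (q,t) is rank-preserving: for every strict type v and all indices i,j, if v_i > v_j then q_i(v) ≥ q_j(v). -/
open Finset

noncomputable section

/-- Dot product of two vectors in ℝ^n. -/
def dot {n : ℕ} (v w : Fin n → ℝ) : ℝ := ∑ i, v i * w i

/-- Strict type space: vectors in [vlo, vhi]^n with pairwise distinct coordinates. -/
def DH (n : ℕ) (vlo vhi : ℝ) : Set (Fin n → ℝ) :=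
  {v | (∀ i, v i ∈ Set.Icc vlo vhi) ∧ Function.Injective v}

/-- Incentive compatibility on a set of types. -/
def IC {n : ℕ} (D : Set (Fin n → ℝ)) (q : (Fin n → ℝ) → Fin n → ℝ)
    (t : (Fin n → ℝ) → ℝ) : Prop :=
  ∀ v ∈ D, ∀ v' ∈ D, dot v (q v) - t v ≥ dot v (q v') - t v'

/-- Symmetry of a mechanism: q_i(v^σ) = q_{σ(i)}(v) and t(v^σ) = t(v),
where (v^σ)_j = v_{σ(j)}. -/
def Symmetric' {n : ℕ} (D : Set (Fin n → ℝ)) (q : (Fin n → ℝ) → Fin n → ℝ)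
    (t : (Fin n → ℝ) → ℝ) : Prop :=
  ∀ v ∈ D, ∀ σ : Equiv.Perm (Fin n), (∀ i, q (v ∘ σ) i = q v (σ i)) ∧ t (v ∘ σ) = t v

/-!
Type `v` may misreport as the permuted type `v ∘ σ`; by symmetry this costs the same payment and
yields the permuted allocation `q v ∘ σ`. So incentive compatibility says that `q v` maximises
`dot v` over its own permutations. For the transposition of `i` and `j` the loss is
`(v i - v j) * (q v i - q v j)`, which must therefore be nonnegative.
-/

theorem comp_perm_mem_DH {n : ℕ} {vlo vhi : ℝ} {v : Fin n → ℝ} (hv : v ∈ DH n vlo vhi)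
    (σ : Equiv.Perm (Fin n)) : v ∘ σ ∈ DH n vlo vhi :=
  ⟨fun k => hv.1 (σ k), hv.2.comp σ.injective⟩

theorem dot_sub_dot_comp_swap {n : ℕ} (v w : Fin n → ℝ) {i j : Fin n} (hij : i ≠ j) :
    dot v w - dot v (w ∘ Equiv.swap i j) = (v i - v j) * (w i - w j) := by
  have hsum : dot v w - dot v (w ∘ Equiv.swap i j)
      = ∑ k, v k * (w k - w (Equiv.swap i j k)) := by
    simp only [dot, Function.comp_apply, mul_sub, Finset.sum_sub_distrib]
  rw [hsum, Fintype.sum_eq_add i j hij fun k hk => by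
    rw [Equiv.swap_apply_of_ne_of_ne hk.1 hk.2, sub_self, mul_zero]]
  simp only [Equiv.swap_apply_left, Equiv.swap_apply_right]
  ring

theorem dot_comp_perm_le_of_symmetric_of_IC {n : ℕ} {vlo vhi : ℝ}
    {q : (Fin n → ℝ) → Fin n → ℝ} {t : (Fin n → ℝ) → ℝ}
    (hsym : Symmetric' (DH n vlo vhi) q t) (hIC : IC (DH n vlo vhi) q t)
    {v : Fin n → ℝ} (hv : v ∈ DH n vlo vhi) (σ : Equiv.Perm (Fin n)) :
    dot v (q v ∘ σ) ≤ dot v (q v) := by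
  obtain ⟨hq, ht⟩ := hsym v hv σ
  have hdev := hIC v hv (v ∘ σ) (comp_perm_mem_DH hv σ)
  rw [ht, show q (v ∘ σ) = q v ∘ σ from funext hq] at hdev
  linarith

theorem symmetric_IC_implies_rank_preserving_general
    (n : ℕ) (vlo vhi : ℝ)
    (q : (Fin n → ℝ) → Fin n → ℝ) (t : (Fin n → ℝ) → ℝ)
    (hsym : Symmetric' (DH n vlo vhi) q t)
    (hIC : IC (DH n vlo vhi) q t) :
    ∀ v ∈ DH n vlo vhi, ∀ i j, v i > v j → q v i ≥ q v j := by
  intro v hv i j hvij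
  have hij : i ≠ j := ne_of_apply_ne v hvij.ne'
  have hloss := dot_sub_dot_comp_swap v (q v) hij
  have hswap := dot_comp_perm_le_of_symmetric_of_IC hsym hIC hv (Equiv.swap i j)
  have hprod : 0 ≤ (v i - v j) * (q v i - q v j) := by linarith
  exact sub_nonneg.mp (nonneg_of_mul_nonneg_right hprod (sub_pos.mpr hvij))

/-- A symmetric IC mechanism on the strict type space is rank-preserving. -/
theorem symmetric_IC_implies_rank_preserving
    (n : ℕ) (vlo vhi : ℝ)
    (q : (Fin n → ℝ) → Fin n → ℝ) (t : (Fin n → ℝ) → ℝ)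
    (hq01 : ∀ v ∈ DH n vlo vhi, ∀ i, q v i ∈ Set.Icc (0:ℝ) 1)
    (hsym : Symmetric' (DH n vlo vhi) q t)
    (hIC : IC (DH n vlo vhi) q t) :
    ∀ v ∈ DH n vlo vhi, ∀ i j, v i > v j → q v i ≥ q v j :=
  symmetric_IC_implies_rank_preserving_general n vlo vhi q t hsym hIC
end
end

section
/- Let (q,t) be an IC mechanism on the decreasing domain D^I = {v ∈ [v̲,v̄]^n : v_1 ≥ v_2 ≥ … ≥ v_n}, where additionally q_1(v) ≥ q_2(v) ≥ … ≥ q_n(v) for every v. If q(v̂) weakly majorizes q(v), i.e., ∑_{i=1}^j q_i(v̂) ≥ ∑_{i=1}^j q_i(v) for all j = 1,…,n, then t(v̂) ≥ t(v). -/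
open Finset

noncomputable section

/-- Decreasing type space: vectors in [vlo, vhi]^n with decreasing coordinates. -/
def DI (n : ℕ) (vlo vhi : ℝ) : Set (Fin n → ℝ) :=
  {v | (∀ i, v i ∈ Set.Icc vlo vhi) ∧ ∀ i j : Fin n, i ≤ j → v i ≥ v j}

/-! Deviating from `v` to `v̂` is unprofitable by incentive compatibility, so
`t v̂ - t v ≥ ∑ᵢ vᵢ (qᵢ(v̂) - qᵢ(v))`. Since `v` is decreasing and nonnegative and the partial
sums of `q(v̂) - q(v)` are nonnegative, Abel summation shows that the right-hand side is
nonnegative. -/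

section AbelSummation

variable {R : Type*} [Semiring R] [PartialOrder R] [IsOrderedRing R]

theorem Fin.mul_sum_le_sum_mul_of_antitone {n : ℕ} {f g : Fin (n + 1) → R} (hf : Antitone f)
    (hg : ∀ j, 0 ≤ ∑ i ∈ Iic j, g i) :
    f (Fin.last n) * ∑ i, g i ≤ ∑ i, f i * g i := by
  induction n with
  | zero => simp
  | succ n ih =>
    have hg' : ∀ j : Fin (n + 1), 0 ≤ ∑ i ∈ Iic j, g i.castSucc := fun j => by
      simpa [Fin.sum_Iic_castSucc] using hg j.castSucc
    have hprefix := ih (hf.comp_monotone Fin.strictMono_castSucc.monotone) hg'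
    have hstep : f (Fin.last (n + 1)) * ∑ i : Fin (n + 1), g i.castSucc
        ≤ f (Fin.last n).castSucc * ∑ i : Fin (n + 1), g i.castSucc :=
      mul_le_mul_of_nonneg_right (hf (Fin.le_last _)) (by simpa only [Iic_top] using hg' ⊤)
    rw [Fin.sum_univ_castSucc g, Fin.sum_univ_castSucc (fun i => f i * g i), mul_add]
    exact add_le_add (hstep.trans hprefix) le_rfl

theorem Fin.sum_mul_nonneg_of_antitone {n : ℕ} {f g : Fin n → R} (hf : Antitone f)
    (hf₀ : ∀ i, 0 ≤ f i) (hg : ∀ j, 0 ≤ ∑ i ∈ Iic j, g i) :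
    0 ≤ ∑ i, f i * g i := by
  cases n with
  | zero => simp
  | succ n =>
    exact (mul_nonneg (hf₀ _) (by simpa only [Iic_top] using hg ⊤)).trans
      (Fin.mul_sum_le_sum_mul_of_antitone hf hg)

end AbelSummation

theorem dot_le_dot_of_sum_Iic_le {n : ℕ} {v a b : Fin n → ℝ} (hv : Antitone v)
    (hv₀ : ∀ i, 0 ≤ v i) (hab : ∀ j, ∑ i ∈ Iic j, a i ≤ ∑ i ∈ Iic j, b i) :
    dot v a ≤ dot v b := by
  have h := Fin.sum_mul_nonneg_of_antitone (g := b - a) hv hv₀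
    fun j => by simpa [sum_sub_distrib] using hab j
  simpa [dot, mul_sub, sum_sub_distrib] using h

theorem weak_majorization_implies_payment_order_general
    (n : ℕ) (vlo vhi : ℝ) (hvlo : 0 ≤ vlo)
    (q : (Fin n → ℝ) → Fin n → ℝ) (t : (Fin n → ℝ) → ℝ)
    (hIC : IC (DI n vlo vhi) q t)
    (v vhat : Fin n → ℝ) (hv : v ∈ DI n vlo vhi) (hvhat : vhat ∈ DI n vlo vhi)
    (hmaj : ∀ j : Fin n, ∑ i ∈ Finset.Iic j, q vhat i ≥ ∑ i ∈ Finset.Iic j, q v i) :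
    t vhat ≥ t v := by
  have hdeviation := hIC v hv vhat hvhat
  have hvalue : dot v (q v) ≤ dot v (q vhat) :=
    dot_le_dot_of_sum_Iic_le hv.2 (fun i => hvlo.trans (hv.1 i).1) hmaj
  linarith

/-- for an IC mechanism on the decreasing domain with decreasing
allocation vectors, weak majorization of allocations implies ordering of payments. -/
theorem weak_majorization_implies_payment_order
    (n : ℕ) (vlo vhi : ℝ) (hvlo : 0 ≤ vlo)
    (q : (Fin n → ℝ) → Fin n → ℝ) (t : (Fin n → ℝ) → ℝ)
    (hq01 : ∀ v ∈ DI n vlo vhi, ∀ i, q v i ∈ Set.Icc (0:ℝ) 1)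
    (hqdec : ∀ v ∈ DI n vlo vhi, ∀ i j : Fin n, i ≤ j → q v i ≥ q v j)
    (hIC : IC (DI n vlo vhi) q t)
    (v vhat : Fin n → ℝ) (hv : v ∈ DI n vlo vhi) (hvhat : vhat ∈ DI n vlo vhi)
    (hmaj : ∀ j : Fin n, ∑ i ∈ Finset.Iic j, q vhat i ≥ ∑ i ∈ Finset.Iic j, q v i) :
    t vhat ≥ t v :=
  weak_majorization_implies_payment_order_general n vlo vhi hvlo q t hIC v vhat hv hvhat hmaj
end
end

section
/- Let u : D^I → ℝ be convex, v ∈ D^I, i an index, v'_i ≠ v_i with (v'_i, v_{−i}) ∈ D^I. If x is a subgradient of u at v and some y with y_i = x_i is a subgradient of u at (v'_i, v_{−i}), then x is also a subgradient of u at (v'_i, v_{−i}) and y is also a subgradient of u at v. -/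
/-!
Write `w` for the modified type. The subgradient inequalities of `x` at `v` and of `y` at `w`,
evaluated at the other point, give `x ⬝ᵥ (w - v) ≤ u w - u v ≤ y ⬝ᵥ (w - v)`. Since `w - v` is
supported on coordinate `i`, where `x` and `y` agree, both ends equal `x i * (c - v i)`, so
`u w - u v` is pinned down; then each affine minorant is tight at both points, and a subgradient
whose minorant is tight at another point of the domain is a subgradient there too.
-/

open Finset

noncomputable section

/-- x is a subgradient of u at v relative to the domain D. -/
def Subgradient {n : ℕ} (D : Set (Fin n → ℝ)) (u : (Fin n → ℝ) → ℝ)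
    (v x : Fin n → ℝ) : Prop :=
  ∀ v' ∈ D, u v' - u v ≥ dot x (fun i => v' i - v i)

lemma Function.update_sub_self {ι G : Type*} [DecidableEq ι] [AddGroup G]
    (v : ι → G) (i : ι) (c : G) : Function.update v i c - v = Pi.single i (c - v i) := by
  ext j
  rcases eq_or_ne j i with rfl | hj
  · simp
  · simp [hj]

namespace Subgradient

variable {n : ℕ} {D : Set (Fin n → ℝ)} {u : (Fin n → ℝ) → ℝ} {v w x y : Fin n → ℝ}

lemma le_sub (hx : Subgradient D u v x) (hw : w ∈ D) : x ⬝ᵥ (w - v) ≤ u w - u v :=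
  hx w hw

lemma of_sub_le (hx : Subgradient D u v x) (h : u w - u v ≤ x ⬝ᵥ (w - v)) :
    Subgradient D u w x := by
  intro v' hv'
  have := hx.le_sub hv'
  change x ⬝ᵥ (v' - w) ≤ _
  rw [show v' - w = (v' - v) - (w - v) by abel, dotProduct_sub]
  linarith

theorem swap_of_dotProduct_sub_eq (hx : Subgradient D u v x) (hy : Subgradient D u w y)
    (hv : v ∈ D) (hw : w ∈ D) (h : x ⬝ᵥ (w - v) = y ⬝ᵥ (w - v)) :
    Subgradient D u w x ∧ Subgradient D u v y := by
  have hxw := hx.le_sub hw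
  have hyv := hy.le_sub hv
  have hwv : v - w = -(w - v) := (neg_sub w v).symm
  rw [hwv, dotProduct_neg] at hyv
  exact ⟨hx.of_sub_le (by linarith), hy.of_sub_le (by rw [hwv, dotProduct_neg]; linarith)⟩

end Subgradient

theorem subgradient_swap_general
    (n : ℕ) (D : Set (Fin n → ℝ))
    (u : (Fin n → ℝ) → ℝ)
    (v : Fin n → ℝ) (hv : v ∈ D)
    (i : Fin n) (c : ℝ)
    (hv' : Function.update v i c ∈ D)
    (x y : Fin n → ℝ)
    (hx : Subgradient D u v x)
    (hy : Subgradient D u (Function.update v i c) y)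
    (hxy : y i = x i) :
    Subgradient D u (Function.update v i c) x ∧ Subgradient D u v y :=
  hx.swap_of_dotProduct_sub_eq hy hv hv' <| by
    rw [Function.update_sub_self, dotProduct_single, dotProduct_single, hxy]

/-- subgradients with equal i-th coordinate at two types differing
only in coordinate i can be swapped. -/
theorem subgradient_swap
    (n : ℕ) (D : Set (Fin n → ℝ)) (hD : Convex ℝ D)
    (u : (Fin n → ℝ) → ℝ) (hu : ConvexOn ℝ D u)
    (v : Fin n → ℝ) (hv : v ∈ D)
    (i : Fin n) (c : ℝ) (hc : c ≠ v i)
    (hv' : Function.update v i c ∈ D)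
    (x y : Fin n → ℝ)
    (hx : Subgradient D u v x)
    (hy : Subgradient D u (Function.update v i c) y)
    (hxy : y i = x i) :
    Subgradient D u (Function.update v i c) x ∧ Subgradient D u v y :=
  subgradient_swap_general n D u v hv i c hv' x y hx hy hxy
end
end

section
/- Let (q,t) be an IC and IR mechanism on the strict type space D^M (a dense subset of the compact box D̄^M = [v̲,v̄]^n, or of the decreasing box), with payments bounded below. Then there exists an IC and IR mechanism (q̄, t̄) on all of D̄^M that agrees with (q,t) on D^M. -/
/-! Payments and allocations range over a compact box, so at every point of the closure of `D`
the outcomes `(q u, t u)`, `u → v` in `D`, have an accumulation point; take it as the extension.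
Then each extended type–outcome pair lies in the closure of the graph of `(q, t)` over `D`, and the
IC and IR inequalities, being closed conditions on pairs of graph points, pass to that closure. -/

open Finset

noncomputable section

def IR {n : ℕ} (D : Set (Fin n → ℝ)) (q : (Fin n → ℝ) → Fin n → ℝ)
    (t : (Fin n → ℝ) → ℝ) : Prop :=
  ∀ v ∈ D, dot v (q v) - t v ≥ 0

open Filter Topology Set

theorem exists_mem_closure_graph {X Y : Type*} [TopologicalSpace X] [TopologicalSpace Y]
    {s : Set X} {K : Set Y} {g : X → Y} (hK : IsCompact K) (hg : MapsTo g s K) {x : X}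
    (hx : x ∈ closure s) : ∃ y ∈ K, (x, y) ∈ closure ((fun x => (x, g x)) '' s) := by
  have := mem_closure_iff_nhdsWithin_neBot.1 hx
  let U := Ultrafilter.of (𝓝[s] x)
  have hU : (U : Filter X) ≤ 𝓝[s] x := Ultrafilter.of_le _
  have hUs : ∀ᶠ z in (U : Filter X), z ∈ s := hU self_mem_nhdsWithin
  obtain ⟨y, hyK, hy⟩ := hK.ultrafilter_le_nhds (U.map g) <| by
    rw [Ultrafilter.coe_map, le_principal_iff]
    exact hUs.mono fun z hz => hg hz
  have hUx : Tendsto id (U : Filter X) (𝓝 x) := hU.trans nhdsWithin_le_nhds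
  refine ⟨y, hyK, mem_closure_of_tendsto (hUx.prodMk_nhds hy) ?_⟩
  filter_upwards [hUs] with z hz using mem_image_of_mem _ hz

theorem exists_extension_mem_closure_graph {X Y : Type*} [TopologicalSpace X]
    [TopologicalSpace Y] [Nonempty Y] {s : Set X} {K : Set Y} {g : X → Y} (hK : IsCompact K)
    (hg : MapsTo g s K) :
    ∃ g' : X → Y, EqOn g' g s ∧
      ∀ x ∈ closure s, g' x ∈ K ∧ (x, g' x) ∈ closure ((fun x => (x, g x)) '' s) := by
  classical
  choose! y hyK hy using fun x (hx : x ∈ closure s) => exists_mem_closure_graph hK hg hx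
  refine ⟨s.piecewise g y, fun x hx => piecewise_eq_of_mem _ _ _ hx, fun x hx => ?_⟩
  by_cases hxs : x ∈ s
  · rw [piecewise_eq_of_mem _ _ _ hxs]
    exact ⟨hg hxs, subset_closure (mem_image_of_mem _ hxs)⟩
  · rw [piecewise_eq_of_notMem _ _ _ hxs]
    exact ⟨hyK x hx, hy x hx⟩

theorem closure_prod_subset_of_prod_subset {X : Type*} [TopologicalSpace X] {S : Set X}
    {R : Set (X × X)} (hR : IsClosed R) (h : S ×ˢ S ⊆ R) : closure S ×ˢ closure S ⊆ R :=
  closure_prod_eq (s := S) (t := S) ▸ closure_minimal h hR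

def utility {n : ℕ} (v : Fin n → ℝ) (o : (Fin n → ℝ) × ℝ) : ℝ := dot v o.1 - o.2

@[fun_prop]
theorem Continuous.utility {α : Type*} [TopologicalSpace α] {n : ℕ} {f : α → Fin n → ℝ}
    {g : α → (Fin n → ℝ) × ℝ} (hf : Continuous f) (hg : Continuous g) :
    Continuous fun a => utility (f a) (g a) := by
  unfold _root_.utility dot
  fun_prop

section Mechanism

variable {n : ℕ} {D : Set (Fin n → ℝ)} {q : (Fin n → ℝ) → Fin n → ℝ} {t : (Fin n → ℝ) → ℝ}

theorem utility_le_of_mem_closure_graph (hIC : IC D q t)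
    {a b : (Fin n → ℝ) × ((Fin n → ℝ) × ℝ)}
    (ha : a ∈ closure ((fun v => (v, q v, t v)) '' D))
    (hb : b ∈ closure ((fun v => (v, q v, t v)) '' D)) :
    utility a.1 b.2 ≤ utility a.1 a.2 := by
  have hR : IsClosed {z : ((Fin n → ℝ) × ((Fin n → ℝ) × ℝ)) × ((Fin n → ℝ) × ((Fin n → ℝ) × ℝ)) |
      utility z.1.1 z.2.2 ≤ utility z.1.1 z.1.2} :=
    isClosed_le (by fun_prop) (by fun_prop)
  refine closure_prod_subset_of_prod_subset (R := {z | _}) hR ?_ (mk_mem_prod ha hb)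
  rintro ⟨_, _⟩ ⟨⟨v, hv, rfl⟩, ⟨v', hv', rfl⟩⟩
  exact hIC v hv v' hv'

theorem utility_nonneg_of_mem_closure_graph (hIR : IR D q t)
    {a : (Fin n → ℝ) × ((Fin n → ℝ) × ℝ)}
    (ha : a ∈ closure ((fun v => (v, q v, t v)) '' D)) :
    0 ≤ utility a.1 a.2 := by
  have hR : IsClosed {a : (Fin n → ℝ) × ((Fin n → ℝ) × ℝ) | 0 ≤ utility a.1 a.2} :=
    isClosed_le continuous_const (by fun_prop)
  refine closure_minimal (s := (fun v => (v, q v, t v)) '' D) ?_ hR ha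
  rintro _ ⟨v, hv, rfl⟩
  exact hIR v hv

end Mechanism

theorem extension_to_closure_general
    (n : ℕ) (Dbar D : Set (Fin n → ℝ))
    (hdense : Dbar ⊆ closure D)
    (q : (Fin n → ℝ) → Fin n → ℝ) (t : (Fin n → ℝ) → ℝ)
    (hq01 : ∀ v ∈ D, ∀ i, q v i ∈ Set.Icc (0:ℝ) 1)
    (C vlo : ℝ) (htbdd : ∀ v ∈ D, t v ∈ Set.Icc vlo C)
    (hIC : IC D q t) (hIR : IR D q t) :
    ∃ (qbar : (Fin n → ℝ) → Fin n → ℝ) (tbar : (Fin n → ℝ) → ℝ),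
      (∀ v ∈ Dbar, ∀ i, qbar v i ∈ Set.Icc (0:ℝ) 1) ∧
      IC Dbar qbar tbar ∧ IR Dbar qbar tbar ∧
      (∀ v ∈ D, qbar v = q v ∧ tbar v = t v) := by
  have hK : IsCompact ((univ.pi fun _ : Fin n => Icc (0:ℝ) 1) ×ˢ Icc vlo C) :=
    (isCompact_univ_pi fun _ => isCompact_Icc).prod isCompact_Icc
  obtain ⟨g, hgD, hg⟩ := exists_extension_mem_closure_graph (g := fun v => (q v, t v)) hK
    fun v hv => ⟨mem_univ_pi.2 (hq01 v hv), htbdd v hv⟩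
  refine ⟨fun v => (g v).1, fun v => (g v).2, fun v hv => ?_, fun v hv v' hv' => ?_,
    fun v hv => ?_, fun v hv => Prod.ext_iff.1 (hgD hv)⟩
  · exact mem_univ_pi.1 (hg v (hdense hv)).1.1
  · exact utility_le_of_mem_closure_graph hIC (hg v (hdense hv)).2 (hg v' (hdense hv')).2
  · exact utility_nonneg_of_mem_closure_graph hIR (hg v (hdense hv)).2

/-- an IC and IR mechanism with bounded payments on a dense subset D
of a compact type space D̄ extends to an IC and IR mechanism on all of D̄. -/
theorem extension_to_closure
    (n : ℕ) (Dbar D : Set (Fin n → ℝ))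
    (hsub : D ⊆ Dbar)
    (hcompact : IsCompact Dbar)
    (hdense : Dbar ⊆ closure D)
    (q : (Fin n → ℝ) → Fin n → ℝ) (t : (Fin n → ℝ) → ℝ)
    (hq01 : ∀ v ∈ D, ∀ i, q v i ∈ Set.Icc (0:ℝ) 1)
    (C vlo : ℝ) (htbdd : ∀ v ∈ D, t v ∈ Set.Icc vlo C)
    (hIC : IC D q t) (hIR : IR D q t) :
    ∃ (qbar : (Fin n → ℝ) → Fin n → ℝ) (tbar : (Fin n → ℝ) → ℝ),
      (∀ v ∈ Dbar, ∀ i, qbar v i ∈ Set.Icc (0:ℝ) 1) ∧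
      IC Dbar qbar tbar ∧ IR Dbar qbar tbar ∧
      (∀ v ∈ D, qbar v = q v ∧ tbar v = t v) :=
  extension_to_closure_general n Dbar D hdense q t hq01 C vlo htbdd hIC hIR
end
end

section
/- Let (q,t) be an IC, almost deterministic, object non-bossy mechanism on D^I with q(v) decreasing in components for every v (rank-preserving on the decreasing domain). Then for all (v_i, v_{−i}), (v̂_i, v_{−i}) ∈ D^I with v̂_i > v_i, the payment satisfies t(v̂_i, v_{−i}) ≥ t(v_i, v_{−i}). -/
/-!
Incentive compatibility makes bidder `i`'s own allocation weakly increase when `v i` rises to `c`.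
Two decreasing almost-deterministic allocation vectors are always componentwise comparable: where
they cross, both would have to be strictly fractional at two different positions. So either the
allocation rises componentwise, or it falls componentwise while `q · i` does not, in which case
`q · i` is unchanged and object non-bossiness forces the whole vector to be unchanged. Componentwise
domination of the allocation, valued at the nonnegative type `v`, then bounds the payment
difference from below through the IC constraint at `v`.
-/

open Finset

noncomputable section

/-- Almost deterministic allocation: at each type, all but at most one coordinate
of the allocation vector is 0 or 1. -/
def AlmostDeterministic {n : ℕ} (D : Set (Fin n → ℝ))
    (q : (Fin n → ℝ) → Fin n → ℝ) : Prop :=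
  ∀ v ∈ D, ∃ k : Fin n, ∀ j : Fin n, j ≠ k → q v j = 0 ∨ q v j = 1

/-- Object non-bossiness. -/
def ObjectNonBossy {n : ℕ} (D : Set (Fin n → ℝ))
    (q : (Fin n → ℝ) → Fin n → ℝ) : Prop :=
  ∀ v ∈ D, ∀ i : Fin n, ∀ c : ℝ, Function.update v i c ∈ D →
    q v i = q (Function.update v i c) i → q v = q (Function.update v i c)

def IsAlmostDeterministic {ι : Type*} (w : ι → ℝ) : Prop :=
  ∃ k, ∀ j, j ≠ k → w j = 0 ∨ w j = 1

section Comparability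

variable {ι : Type*} [LinearOrder ι] {w w' : ι → ℝ}

theorem IsAlmostDeterministic.eq_of_lt_one_of_pos (hw : IsAlmostDeterministic w)
    (hanti : Antitone w) {a b : ι} (hab : a ≤ b) (ha : w a < 1) (hb : 0 < w b) : a = b := by
  obtain ⟨k, hk⟩ := hw
  have hfrac : ∀ j, 0 < w j → w j < 1 → j = k := fun j h0 h1 => by
    by_contra hj
    rcases hk j hj with h | h <;> linarith
  have hba : w b ≤ w a := hanti hab
  rw [hfrac a (by linarith) ha, hfrac b hb (by linarith)]

theorem IsAlmostDeterministic.le_or_le (hw : IsAlmostDeterministic w)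
    (hw' : IsAlmostDeterministic w') (hanti : Antitone w) (hanti' : Antitone w')
    (hw01 : ∀ j, w j ∈ Set.Icc (0 : ℝ) 1) (hw'01 : ∀ j, w' j ∈ Set.Icc (0 : ℝ) 1) :
    w ≤ w' ∨ w' ≤ w := by
  by_contra! hcross
  simp only [Pi.le_def, not_forall, not_le] at hcross
  obtain ⟨⟨a, ha⟩, ⟨b, hb⟩⟩ := hcross
  have hne : a ≠ b := by rintro rfl; exact lt_asymm ha hb
  rcases hne.lt_or_gt with hab | hba
  · exact hab.ne (hw'.eq_of_lt_one_of_pos hanti' hab.le (ha.trans_le (hw01 a).2)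
      ((hw01 b).1.trans_lt hb))
  · exact hba.ne (hw.eq_of_lt_one_of_pos hanti hba.le (hb.trans_le (hw'01 b).2)
      ((hw'01 a).1.trans_lt ha))

end Comparability

lemma dot_update_sub_dot {n : ℕ} (v w : Fin n → ℝ) (i : Fin n) (c : ℝ) :
    dot (Function.update v i c) w - dot v w = (c - v i) * w i := by
  rw [dot, dot, ← sum_sub_distrib, sum_eq_single i (fun j _ hj => by simp [hj]) (by simp)]
  simp only [Function.update_self]
  ring

lemma dot_le_dot_of_le {n : ℕ} {v w w' : Fin n → ℝ} (hv : 0 ≤ v) (hw : w ≤ w') :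
    dot v w ≤ dot v w' :=
  sum_le_sum fun j _ => mul_le_mul_of_nonneg_left (hw j) (hv j)

section IC

variable {n : ℕ} {D : Set (Fin n → ℝ)} {q : (Fin n → ℝ) → Fin n → ℝ} {t : (Fin n → ℝ) → ℝ}

theorem IC.apply_le_apply_update (hIC : IC D q t) {v : Fin n → ℝ} (hv : v ∈ D) {i : Fin n}
    {c : ℝ} (hc : v i < c) (hv' : Function.update v i c ∈ D) :
    q v i ≤ q (Function.update v i c) i := by
  have h := hIC v hv _ hv'
  have h' := hIC _ hv' v hv
  have e := dot_update_sub_dot v (q v) i c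
  have e' := dot_update_sub_dot v (q (Function.update v i c)) i c
  have hprod : 0 ≤ (c - v i) * (q (Function.update v i c) i - q v i) := by linarith
  exact sub_nonneg.mp (nonneg_of_mul_nonneg_right hprod (sub_pos.mpr hc))

theorem IC.payment_le_of_allocation_le (hIC : IC D q t) {v v' : Fin n → ℝ} (hv : v ∈ D)
    (hv' : v' ∈ D) (hv0 : 0 ≤ v) (hq : q v ≤ q v') : t v ≤ t v' := by
  have := hIC v hv v' hv'
  have := dot_le_dot_of_le hv0 hq
  linarith

end IC

/-- for an IC, almost deterministic, object non-bossy mechanism with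
decreasing allocation vectors on the decreasing domain (with v̲ ≥ 0), payments are
monotone in each coordinate. -/
theorem almost_deterministic_payment_monotone
    (n : ℕ) (vlo vhi : ℝ) (hvlo : 0 ≤ vlo)
    (q : (Fin n → ℝ) → Fin n → ℝ) (t : (Fin n → ℝ) → ℝ)
    (hq01 : ∀ v ∈ DI n vlo vhi, ∀ i, q v i ∈ Set.Icc (0:ℝ) 1)
    (hIC : IC (DI n vlo vhi) q t)
    (had : AlmostDeterministic (DI n vlo vhi) q)
    (hnb : ObjectNonBossy (DI n vlo vhi) q)
    (hqdec : ∀ v ∈ DI n vlo vhi, ∀ i j : Fin n, i ≤ j → q v i ≥ q v j)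
    (v : Fin n → ℝ) (hv : v ∈ DI n vlo vhi)
    (i : Fin n) (c : ℝ) (hc : c > v i)
    (hv' : Function.update v i c ∈ DI n vlo vhi) :
    t (Function.update v i c) ≥ t v := by
  have hown := hIC.apply_le_apply_update hv hc hv'
  have hle : q v ≤ q (Function.update v i c) := by
    rcases IsAlmostDeterministic.le_or_le (had v hv) (had _ hv') (hqdec v hv) (hqdec _ hv')
      (hq01 v hv) (hq01 _ hv') with hup | hdown
    · exact hup
    · exact (hnb v hv i c hv' (le_antisymm hown (hdown i))).le
  exact hIC.payment_le_of_allocation_le hv hv' (fun j => hvlo.trans (hv.1 j).1) hle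
end
end
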